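/- Let α ∈ (0,1], let x ∈ (0,1) be irrational with convergents p_n/q_n, let y ∈ (−∞,−1), and let n ≥ 0. Then ‖𝐓^{n+1}(x,y)‖ < α if and only if the hyperbolic geodesic with endpoints x and y, i.e. the semicircle {z ∈ ℂ : Im z > 0, |z − (x+y)/2| = (x−y)/2}, intersects the open disc D_{p_n/q_n}(α) = {z ∈ ℂ : |z − (p_n/q_n + i·α/q_n²)| < α/q_n²} of radius α/q_n² tangent to ℝ at p_n/q_n. -/

import Mathlib

open Real MeasureTheory Filter Set
open scoped Classical

noncomputable section

/-- The Gauss map `T x = 1/x - ⌊1/x⌋`. -/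
def gaussMap (x : ℝ) : ℝ := 1/x - ⌊1/x⌋

/-- The natural extension `𝐓(x,y) = (1/x - ⌊1/x⌋, 1/y - ⌊1/x⌋)`. -/
def natExt (p : ℝ × ℝ) : ℝ × ℝ := (1/p.1 - ⌊1/p.1⌋, 1/p.2 - ⌊1/p.1⌋)

/-- `(x₀, y₀) = 𝐓(x, ∞) = (1/x - ⌊1/x⌋, -⌊1/x⌋)`. -/
def initPt (x : ℝ) : ℝ × ℝ := (1/x - ⌊1/x⌋, -(⌊1/x⌋ : ℝ))

/-- Partial quotient `a_n = ⌊1 / T^{n-1} x⌋` (indexed from 1). -/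
def cfA (x : ℝ) (n : ℕ) : ℤ := ⌊1 / (gaussMap^[n-1] x)⌋

/-- The pair `(p_n, q_n)` of numerator and denominator of the `n`-th convergent. -/
def pq (x : ℝ) : ℕ → ℤ × ℤ
  | 0 => (0, 1)
  | 1 => (1, ⌊1/x⌋)
  | n+2 => (cfA x (n+2) * (pq x (n+1)).1 + (pq x n).1,
            cfA x (n+2) * (pq x (n+1)).2 + (pq x n).2)

def pconv (x : ℝ) (n : ℕ) : ℤ := (pq x n).1
def qconv (x : ℝ) (n : ℕ) : ℤ := (pq x n).2

/-- `θ_n(x) = q_n |q_n x - p_n|`. -/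
def theta (x : ℝ) (n : ℕ) : ℝ := (qconv x n : ℝ) * |(qconv x n : ℝ) * x - (pconv x n : ℝ)|

/-- `Ω = (0,1) × (-∞,-1)`. -/
def Ωset : Set (ℝ × ℝ) := Set.Ioo (0:ℝ) 1 ×ˢ Set.Iio (-1 : ℝ)

/-- `Ω_α = {(x,y) ∈ Ω : 1/(x-y) < α}`. -/
def Ωα (α : ℝ) : Set (ℝ × ℝ) := {p ∈ Ωset | 1 / (p.1 - p.2) < α}

/-- First return time to `Ω_α` (defined as `sInf`, so `0` when undefined). -/
def tauα (α : ℝ) (p : ℝ × ℝ) : ℕ := sInf {n : ℕ | 1 ≤ n ∧ natExt^[n] p ∈ Ωα α}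

/-- First return map `𝐓_α`. -/
def retMap (α : ℝ) (p : ℝ × ℝ) : ℝ × ℝ := natExt^[tauα α p] p

/-- The invariant measure `μ` with density `(log 2)⁻¹ (x-y)⁻²` on `Ω`. -/
def μnat : Measure (ℝ × ℝ) :=
  (volume.restrict Ωset).withDensity
    (fun p => ENNReal.ofReal ((Real.log 2)⁻¹ * ((p.1 - p.2)⁻¹)^2))

/-- `c_α = (log 2 · μ(Ω_α))⁻¹`, explicitly. -/
def cα (α : ℝ) : ℝ := if 1/2 < α then (1 - α + Real.log 2 + Real.log α)⁻¹ else α⁻¹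

/-- The probability measure `μ_α` with density `c_α (x-y)⁻²` on `Ω_α`. -/
def μmeas (α : ℝ) : Measure (ℝ × ℝ) :=
  (volume.restrict (Ωα α)).withDensity
    (fun p => ENNReal.ofReal (cα α * ((p.1 - p.2)⁻¹)^2))

/-- `Ω_α⁻ = {(x,y) ∈ Ω : α < x, y < αx/(α-x)}`. -/
def Ωminus (α : ℝ) : Set (ℝ × ℝ) := {p ∈ Ωset | α < p.1 ∧ p.2 < α * p.1 / (α - p.1)}

/-! The convergents act on the natural extension by a Möbius map: `𝐓^{n+1}(x, y) = (M x, M y)` with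
`M s = -(q_{n+1} s - p_{n+1}) / (q_n s - p_n)`, a map of determinant `±1`. Hence
`‖𝐓^{n+1}(x, y)‖ = |q_n x - p_n| |q_n y - p_n| / (x - y)`. On the other side, a semicircle of centre
`c` and radius `R` meets the disc of radius `r` tangent to `ℝ` at `t` iff the centres are at distance
between `|R - r|` and `R + r`, i.e. iff `|(t - c)² - R²| < 2 R r`; for `c = (x + y)/2`, `R = (x - y)/2`
this reads `|(t - x)(t - y)| < (x - y) r`, and with `t = p_n/q_n`, `r = α/q_n²` both conditions become
`|q_n x - p_n| |q_n y - p_n| < α (x - y)`. -/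

lemma upperHalf_sphere_inter_ball_nonempty_iff (c : ℝ) {R : ℝ} (hR : 0 < R) {w : ℂ}
    (hw : 0 < w.im) (r : ℝ) :
    ({z : ℂ | 0 < z.im ∧ ‖z - c‖ = R} ∩ {z : ℂ | ‖z - w‖ < r}).Nonempty ↔
      |‖w - c‖ - R| < r := by
  constructor
  · rintro ⟨z, ⟨-, hzc⟩, hzw⟩
    calc |‖w - c‖ - R| = |dist w c - dist z c| := by rw [dist_eq_norm, dist_eq_norm, hzc]
      _ ≤ dist w z := abs_dist_sub_le _ _ _
      _ < r := by rwa [dist_comm, dist_eq_norm]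
  · intro h
    have hm : 0 < ‖w - c‖ := norm_pos_iff.2 fun hwc => by
      simp [sub_eq_zero.1 hwc] at hw
    rw [← dist_eq_norm, dist_comm] at h hm
    -- the point of the circle nearest to `w`
    refine ⟨AffineMap.lineMap (c : ℂ) w (R / dist (c : ℂ) w), ⟨?_, ?_⟩, ?_⟩
    · simp only [AffineMap.lineMap_apply_module, Complex.add_im, Complex.real_smul,
        Complex.mul_im, Complex.ofReal_re, Complex.ofReal_im, mul_zero, zero_mul, zero_add,
        add_zero]
      positivity
    · rw [← dist_eq_norm, dist_lineMap_left, Real.norm_eq_abs, abs_of_pos (by positivity),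
        div_mul_cancel₀ _ hm.ne']
    · have hd : (1 - R / dist (c : ℂ) w) * dist (c : ℂ) w = dist (c : ℂ) w - R := by
        field_simp
      rw [← hd, abs_mul, abs_of_pos hm] at h
      rwa [Set.mem_ofPred_eq, ← dist_eq_norm, dist_lineMap_right, Real.norm_eq_abs]

lemma abs_sub_lt_iff_abs_sq_sub_lt {m R r : ℝ} (hR : 0 < R) (hr : 0 < r) (hrm : r ≤ m) :
    |m - R| < r ↔ |m ^ 2 - r ^ 2 - R ^ 2| < 2 * R * r := by
  rw [abs_lt, abs_lt]
  constructor
  · rintro ⟨h₁, h₂⟩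
    constructor
    · nlinarith [mul_pos (show 0 < m - (R - r) by linarith) (show 0 < m + (R - r) by linarith)]
    · nlinarith [mul_pos (show 0 < R + r - m by linarith) (show 0 < R + r + m by linarith)]
  · rintro ⟨h₁, h₂⟩
    have hlow : R - r < m := lt_of_pow_lt_pow_left₀ 2 (by linarith) (by nlinarith)
    have hupp : m < R + r := lt_of_pow_lt_pow_left₀ 2 (by linarith) (by nlinarith)
    constructor <;> linarith

lemma semicircle_inter_tangentDisc_nonempty_iff {x y : ℝ} (hyx : y < x) (t r : ℝ) :
    ({z : ℂ | 0 < z.im ∧ ‖z - (((x + y) / 2 : ℝ) : ℂ)‖ = (x - y) / 2} ∩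
      {z : ℂ | ‖z - ((t : ℂ) + (r : ℂ) * Complex.I)‖ < r}).Nonempty ↔
    |(t - x) * (t - y)| < (x - y) * r := by
  rcases le_or_gt r 0 with hr | hr
  · refine iff_of_false (fun ⟨z, _, hz⟩ => (norm_nonneg _).not_gt (hz.trans_le hr)) ?_
    exact ((mul_nonpos_of_nonneg_of_nonpos (by linarith) hr).trans (abs_nonneg _)).not_gt
  set w : ℂ := t + r * Complex.I
  have hw_re : (w - (((x + y) / 2 : ℝ) : ℂ)).re = t - (x + y) / 2 := by simp [w]
  have hw_im : (w - (((x + y) / 2 : ℝ) : ℂ)).im = r := by simp [w]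
  have hnorm_sq : ‖w - (((x + y) / 2 : ℝ) : ℂ)‖ ^ 2 = (t - (x + y) / 2) ^ 2 + r ^ 2 := by
    rw [Complex.sq_norm, Complex.normSq_apply, hw_re, hw_im]; ring
  have hr_le : r ≤ ‖w - (((x + y) / 2 : ℝ) : ℂ)‖ :=
    hw_im ▸ (le_abs_self _).trans (Complex.abs_im_le_norm _)
  rw [upperHalf_sphere_inter_ball_nonempty_iff _ (by linarith) (by simpa [w] using hr),
    abs_sub_lt_iff_abs_sq_sub_lt (by linarith) hr hr_le, hnorm_sq,
    show (t - (x + y) / 2) ^ 2 + r ^ 2 - r ^ 2 - ((x - y) / 2) ^ 2 = (t - x) * (t - y) by ring,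
    show 2 * ((x - y) / 2) * r = (x - y) * r by ring]

lemma irrational_gaussMap {t : ℝ} (ht : Irrational t) : Irrational (gaussMap t) := by
  simpa only [gaussMap, one_div] using ht.inv.sub_intCast ⌊t⁻¹⌋

lemma gaussMap_mem_Ioo {t : ℝ} (ht : Irrational t) : gaussMap t ∈ Ioo 0 1 :=
  ⟨lt_of_le_of_ne (Int.fract_nonneg _) (irrational_gaussMap ht).ne_zero.symm,
    Int.fract_lt_one _⟩

lemma irrational_gaussMap_iterate {t : ℝ} (ht : Irrational t) (k : ℕ) :
    Irrational (gaussMap^[k] t) := by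
  induction k with
  | zero => exact ht
  | succ k ih => rw [Function.iterate_succ_apply']; exact irrational_gaussMap ih

lemma gaussMap_iterate_mem_Ioo {t : ℝ} (ht : Irrational t) (ht₁ : t ∈ Ioo 0 1) (k : ℕ) :
    gaussMap^[k] t ∈ Ioo 0 1 := by
  cases k with
  | zero => exact ht₁
  | succ k =>
    rw [Function.iterate_succ_apply']
    exact gaussMap_mem_Ioo (irrational_gaussMap_iterate ht k)

lemma one_le_cfA {t : ℝ} (ht : Irrational t) (ht₁ : t ∈ Ioo 0 1) (k : ℕ) : 1 ≤ cfA t (k + 1) := by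
  obtain ⟨h₀, h₁⟩ := gaussMap_iterate_mem_Ioo ht ht₁ k
  exact Int.le_floor.2 (by simpa using (one_le_one_div h₀ h₁.le))

lemma pconv_zero (t : ℝ) : pconv t 0 = 0 := rfl
lemma qconv_zero (t : ℝ) : qconv t 0 = 1 := rfl
lemma pconv_one (t : ℝ) : pconv t 1 = 1 := rfl
lemma qconv_one (t : ℝ) : qconv t 1 = cfA t 1 := rfl
lemma pconv_add_two (t : ℝ) (k : ℕ) :
    pconv t (k + 2) = cfA t (k + 2) * pconv t (k + 1) + pconv t k := rfl
lemma qconv_add_two (t : ℝ) (k : ℕ) :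
    qconv t (k + 2) = cfA t (k + 2) * qconv t (k + 1) + qconv t k := rfl

lemma one_le_qconv {t : ℝ} (ht : Irrational t) (ht₁ : t ∈ Ioo 0 1) (k : ℕ) : 1 ≤ qconv t k := by
  induction k using Nat.twoStepInduction with
  | zero => exact le_rfl
  | one => exact one_le_cfA ht ht₁ 0
  | more k _ ih => rw [qconv_add_two]; nlinarith [one_le_cfA ht ht₁ (k + 1)]

lemma pconv_nonneg {t : ℝ} (ht : Irrational t) (ht₁ : t ∈ Ioo 0 1) (k : ℕ) : 0 ≤ pconv t k := by
  induction k using Nat.twoStepInduction with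
  | zero => exact le_rfl
  | one => exact zero_le_one
  | more k _ ih => rw [pconv_add_two]; nlinarith [one_le_cfA ht ht₁ (k + 1)]

lemma pconv_mul_qconv_sub_qconv_mul_pconv (t : ℝ) (k : ℕ) :
    pconv t (k + 1) * qconv t k - qconv t (k + 1) * pconv t k = (-1) ^ k := by
  induction k with
  | zero => rw [pconv_one, qconv_zero, qconv_one, pconv_zero]; ring
  | succ k ih =>
    rw [pconv_add_two, qconv_add_two]
    linear_combination (-1 : ℤ) * ih

def convDiff (t : ℝ) (k : ℕ) (s : ℝ) : ℝ := (qconv t k : ℝ) * s - pconv t k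

lemma convDiff_zero (t s : ℝ) : convDiff t 0 s = s := by
  simp [convDiff, qconv_zero, pconv_zero]

lemma convDiff_add_two (t : ℝ) (k : ℕ) (s : ℝ) :
    convDiff t (k + 2) s = cfA t (k + 2) * convDiff t (k + 1) s + convDiff t k s := by
  simp only [convDiff, pconv_add_two, qconv_add_two]; push_cast; ring

lemma convDiff_ne_zero {t : ℝ} (ht : Irrational t) (ht₁ : t ∈ Ioo 0 1) (k : ℕ) {s : ℝ}
    (hs : Irrational s) : convDiff t k s ≠ 0 :=
  ((hs.intCast_mul (one_pos.trans_le (one_le_qconv ht ht₁ k)).ne').sub_intCast _).ne_zero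

lemma convDiff_neg {t : ℝ} (ht : Irrational t) (ht₁ : t ∈ Ioo 0 1) (k : ℕ) {s : ℝ}
    (hs : s < 0) : convDiff t k s < 0 := by
  have hq : (1 : ℝ) ≤ qconv t k := by exact_mod_cast one_le_qconv ht ht₁ k
  have hp : (0 : ℝ) ≤ pconv t k := by exact_mod_cast pconv_nonneg ht ht₁ k
  unfold convDiff; nlinarith

lemma convDiff_sub_mul_sub_convDiff_mul (t : ℝ) (k : ℕ) (s s' : ℝ) :
    convDiff t (k + 1) s' * convDiff t k s - convDiff t (k + 1) s * convDiff t k s' =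
      (-1) ^ (k + 1) * (s - s') := by
  have h : (pconv t (k + 1) * qconv t k - qconv t (k + 1) * pconv t k : ℝ) = (-1) ^ k := by
    exact_mod_cast pconv_mul_qconv_sub_qconv_mul_pconv t k
  unfold convDiff
  linear_combination (s' - s) * h

def convMobius (t : ℝ) (k : ℕ) (s : ℝ) : ℝ := -convDiff t (k + 1) s / convDiff t k s

lemma convMobius_zero (t : ℝ) {s : ℝ} (hs : s ≠ 0) : convMobius t 0 s = 1 / s - ⌊1 / t⌋ := by
  have hcfA : cfA t 1 = ⌊1 / t⌋ := rfl
  rw [convMobius, convDiff_zero, convDiff, zero_add, qconv_one, pconv_one, hcfA, Int.cast_one]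
  field_simp
  ring

lemma one_div_convMobius_sub_cfA (t : ℝ) (k : ℕ) {s : ℝ} (h : convDiff t (k + 1) s ≠ 0) :
    1 / convMobius t k s - cfA t (k + 2) = convMobius t (k + 1) s := by
  rw [convMobius, convMobius, convDiff_add_two]
  field_simp
  ring

lemma convMobius_sub (t : ℝ) (k : ℕ) {s s' : ℝ} (h : convDiff t k s ≠ 0)
    (h' : convDiff t k s' ≠ 0) :
    convMobius t k s - convMobius t k s' =
      (-1) ^ (k + 1) * (s - s') / (convDiff t k s * convDiff t k s') := by
  rw [convMobius, convMobius, div_sub_div _ _ h h', ← convDiff_sub_mul_sub_convDiff_mul]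
  ring

lemma natExt_iterate_fst (k : ℕ) (p : ℝ × ℝ) : (natExt^[k] p).1 = gaussMap^[k] p.1 := by
  induction k with
  | zero => rfl
  | succ k ih =>
    rw [Function.iterate_succ_apply', Function.iterate_succ_apply', ← ih]
    rfl

lemma natExt_iterate_succ {t u : ℝ} (ht : Irrational t) (ht₁ : t ∈ Ioo 0 1)
    (hu : ∀ k, convDiff t k u ≠ 0) (k : ℕ) :
    natExt^[k + 1] (t, u) = (convMobius t k t, convMobius t k u) := by
  induction k with
  | zero =>
    rw [Function.iterate_one, convMobius_zero t ht.ne_zero,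
      convMobius_zero t (convDiff_zero t u ▸ hu 0)]
    rfl
  | succ k ih =>
    have hfloor : ⌊1 / convMobius t k t⌋ = cfA t (k + 2) := by
      have h : convMobius t k t = gaussMap^[k + 1] t :=
        (congrArg Prod.fst ih).symm.trans (natExt_iterate_fst _ _)
      rw [h]
      rfl
    have hne := fun j => convDiff_ne_zero ht ht₁ j ht
    rw [Function.iterate_succ_apply', ih]
    simp only [natExt, hfloor, one_div_convMobius_sub_cfA t k (hne (k + 1)),
      one_div_convMobius_sub_cfA t k (hu (k + 1))]

lemma one_div_natExt_iterate_sub {x y : ℝ} (hx : Irrational x) (hx₁ : x ∈ Ioo 0 1)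
    (hy : y < 0) (n : ℕ) :
    1 / ((natExt^[n + 1] (x, y)).1 - (natExt^[n + 1] (x, y)).2) =
      |convDiff x n x * convDiff x n y| / (x - y) := by
  have hyx : y < x := hy.trans hx₁.1
  have hxn := convDiff_ne_zero hx hx₁ n hx
  have hyn := convDiff_neg hx hx₁ n hy
  have hform := natExt_iterate_succ hx hx₁ (fun k => (convDiff_neg hx hx₁ k hy).ne) n
  have hfst : 0 < convMobius x n x := by
    rw [show convMobius x n x = gaussMap^[n + 1] x from
      (congrArg Prod.fst hform).symm.trans (natExt_iterate_fst _ _)]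
    exact (gaussMap_iterate_mem_Ioo hx hx₁ (n + 1)).1
  have hsnd : convMobius x n y < 0 :=
    div_neg_of_pos_of_neg (neg_pos.2 (convDiff_neg hx hx₁ (n + 1) hy)) hyn
  have hpos : 0 < convMobius x n x - convMobius x n y := by linarith
  rw [hform, ← abs_of_pos hpos, convMobius_sub x n hxn hyn.ne, abs_div, abs_mul, abs_pow,
    abs_neg, abs_one, one_pow, one_mul, abs_of_pos (sub_pos.2 hyx), one_div_div]

theorem stmt_17_general (α : ℝ) (x : ℝ) (hirr : Irrational x)
    (hx : x ∈ Set.Ioo (0:ℝ) 1) (y : ℝ) (hy : y < -1) (n : ℕ) :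
    1 / ((natExt^[n+1] (x, y)).1 - (natExt^[n+1] (x, y)).2) < α ↔
      ({z : ℂ | 0 < z.im ∧ ‖z - (((x + y) / 2 : ℝ) : ℂ)‖ = (x - y) / 2} ∩
        {z : ℂ | ‖z -
            ((((pconv x n : ℝ) / (qconv x n : ℝ) : ℝ) : ℂ) +
              ((α / ((qconv x n : ℝ))^2 : ℝ) : ℂ) * Complex.I)‖ <
          α / ((qconv x n : ℝ))^2}).Nonempty := by
  have hyx : y < x := by linarith [hx.1]
  have hq : (0 : ℝ) < qconv x n := by exact_mod_cast one_pos.trans_le (one_le_qconv hirr hx n)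
  have hprod : ((pconv x n : ℝ) / qconv x n - x) * ((pconv x n : ℝ) / qconv x n - y) =
      convDiff x n x * convDiff x n y / (qconv x n : ℝ) ^ 2 := by
    unfold convDiff
    field_simp
    ring
  rw [one_div_natExt_iterate_sub hirr hx (by linarith) n,
    semicircle_inter_tangentDisc_nonempty_iff hyx, hprod, abs_div, abs_of_pos (pow_pos hq 2),
    div_lt_iff₀ (sub_pos.2 hyx), mul_div_assoc', div_lt_div_iff_of_pos_right (pow_pos hq 2), mul_comm α]

/-- `‖𝐓^{n+1}(x,y)‖ < α` iff the geodesic semicircle with endpoints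
`x` and `y` meets the open disc of radius `α/q_n²` tangent to `ℝ` at `p_n/q_n`. -/
theorem stmt_17 (α : ℝ) (hα : α ∈ Set.Ioc (0:ℝ) 1) (x : ℝ) (hirr : Irrational x)
    (hx : x ∈ Set.Ioo (0:ℝ) 1) (y : ℝ) (hy : y < -1) (n : ℕ) :
    1 / ((natExt^[n+1] (x, y)).1 - (natExt^[n+1] (x, y)).2) < α ↔
      ({z : ℂ | 0 < z.im ∧ ‖z - (((x + y) / 2 : ℝ) : ℂ)‖ = (x - y) / 2} ∩
        {z : ℂ | ‖z -
            ((((pconv x n : ℝ) / (qconv x n : ℝ) : ℝ) : ℂ) +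
              ((α / ((qconv x n : ℝ))^2 : ℝ) : ℂ) * Complex.I)‖ <
          α / ((qconv x n : ℝ))^2}).Nonempty :=
  stmt_17_general α x hirr hx y hy n
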